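/- arXiv:1206.4409 — 2 statements merged into one kernel-verified Lean document; each statement's English description precedes it below -/
import Mathlib

section
/- The pair (3t − 4, √−10·(t−1)(t−2)) is a nonsingular affine point of the elliptic curve W over ℂ(t), i.e. it satisfies the Weierstrass equation y² = (x − t² + 2)(x² − 2x + t² − 4) and is a smooth point of the affine curve. -/
/-- The elliptic curve `W` over `F = ℂ(t)` given (in Weierstrass form) by
`y² = x³ − t²x² + (3t² − 8)x − t⁴ + 6t² − 8`, which is the expanded form of
`y² = (x − t² + 2)(x² − 2x + t² − 4)`. -/
noncomputable def W : WeierstrassCurve.Affine (RatFunc ℂ) where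
  a₁ := 0
  a₂ := -(RatFunc.X ^ 2)
  a₃ := 0
  a₄ := 3 * RatFunc.X ^ 2 - 8
  a₆ := -(RatFunc.X ^ 4) + 6 * RatFunc.X ^ 2 - 8

/-- `√−10 = i√10 ∈ ℂ`, viewed as a constant of `ℂ(t)`. -/
noncomputable def sqrtNeg10 : RatFunc ℂ := RatFunc.C (Complex.I * (Real.sqrt 10 : ℂ))

lemma hs : sqrtNeg10 ^ 2 = -10 := by
  rw [sqrtNeg10, ← map_pow]
  have : (Complex.I * (Real.sqrt 10 : ℂ)) ^ 2 = -10 := by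
    rw [mul_pow, Complex.I_sq]
    norm_cast
    rw [Real.sq_sqrt (by norm_num)]
    norm_num
  rw [this, map_neg, map_ofNat]

lemma hsne : sqrtNeg10 ≠ 0 := by
  rw [sqrtNeg10, ne_eq, map_eq_zero, mul_eq_zero]
  push_neg
  refine ⟨Complex.I_ne_zero, ?_⟩
  norm_cast
  positivity

lemma hsub (c : ℂ) : (RatFunc.X - RatFunc.C c : RatFunc ℂ) ≠ 0 := by
  have : (RatFunc.X - RatFunc.C c : RatFunc ℂ) =
      algebraMap (Polynomial ℂ) (RatFunc ℂ) (Polynomial.X - Polynomial.C c) := by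
    simp [RatFunc.algebraMap_X, RatFunc.algebraMap_C]
  rw [this]
  exact RatFunc.algebraMap_ne_zero (Polynomial.X_sub_C_ne_zero c)

lemma hX1 : (RatFunc.X - 1 : RatFunc ℂ) ≠ 0 := by simpa using hsub 1

lemma hX2 : (RatFunc.X - 2 : RatFunc ℂ) ≠ 0 := by
  have := hsub 2
  rwa [map_ofNat] at this

/-- The pair `(3t − 4, √−10·(t−1)(t−2))` is a nonsingular affine point of `W`: it satisfies
the Weierstrass equation `y² = (x − t² + 2)(x² − 2x + t² − 4)` and is a smooth point. -/
theorem sL2_nonsingular_point :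
    (sqrtNeg10 * (RatFunc.X - 1) * (RatFunc.X - 2)) ^ 2 =
      ((3 * RatFunc.X - 4) - RatFunc.X ^ 2 + 2) *
        ((3 * RatFunc.X - 4) ^ 2 - 2 * (3 * RatFunc.X - 4) + RatFunc.X ^ 2 - 4) ∧
    W.Nonsingular (3 * RatFunc.X - 4) (sqrtNeg10 * (RatFunc.X - 1) * (RatFunc.X - 2)) := by
  have heq : (sqrtNeg10 * (RatFunc.X - 1) * (RatFunc.X - 2)) ^ 2 =
      ((3 * RatFunc.X - 4) - RatFunc.X ^ 2 + 2) *
        ((3 * RatFunc.X - 4) ^ 2 - 2 * (3 * RatFunc.X - 4) + RatFunc.X ^ 2 - 4) := by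
    linear_combination ((RatFunc.X - 1) * (RatFunc.X - 2)) ^ 2 * hs
  refine ⟨heq, ?_, ?_⟩
  · rw [WeierstrassCurve.Affine.equation_iff]
    simp only [W]
    linear_combination heq
  · right
    rw [WeierstrassCurve.Affine.evalEval_polynomialY]
    show (2 : RatFunc ℂ) * _ + W.a₁ * _ + W.a₃ ≠ 0
    simp only [W]
    rw [zero_mul, add_zero, add_zero]
    have h2 : (2 : RatFunc ℂ) ≠ 0 := by
      rw [← map_ofNat (RatFunc.C (K := ℂ)) 2, ne_eq, map_eq_zero]
      norm_num
    exact mul_ne_zero h2 (mul_ne_zero (mul_ne_zero hsne hX1) hX2)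
end

section
/- The set of a ∈ ℂ for which the polynomial g_{1,a}(t,x) is not irreducible in the polynomial ring ℂ[t,x] is finite; in particular, for all but finitely many a ∈ ℂ the conic g_{1,a} = 0 is reduced and irreducible. -/
open MvPolynomial

/-- The conic `g_{1,a}(t,x) = (−2 − a²/2)t² − √−2·a·x·t − x² + (a² + 2)x + 2a² + 4`
(`√−2 = i√2`), as an element of `ℂ[t,x]`; here `t = X 0` and `x = X 1`. -/
noncomputable def g1 (a : ℂ) : MvPolynomial (Fin 2) ℂ :=
  C (-2 - a ^ 2 / 2) * X 0 ^ 2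
    - C (Complex.I * (Real.sqrt 2 : ℂ) * a) * X 1 * X 0
    - X 1 ^ 2 + C (a ^ 2 + 2) * X 1 + C (2 * a ^ 2 + 4)

/-!
In `ℂ[t][x]`, `-g1 a` is a monic quadratic in `x`; over a domain such a quadratic is reducible
only if it has a root, hence only if its discriminant `D(t)` is a square in `ℂ[t]`. Here `D` is
itself a quadratic in `t`, with discriminant `8 (a² + 2)² (a² + 20)`, and the square of a linear
polynomial has discriminant zero. So `g1 a` is irreducible unless `a² = -2` or `a² = -20`.
-/

namespace Polynomial

variable {R : Type*} [CommRing R] [IsDomain R]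

theorem irreducible_X_sq_add_of_discrim_ne_sq {b c : R} (h : ∀ s : R, discrim 1 b c ≠ s ^ 2) :
    Irreducible (X ^ 2 + C b * X + C c : R[X]) := by
  have hdeg : (X ^ 2 + C b * X + C c : R[X]).natDegree = 2 := by
    simpa using natDegree_quadratic (R := R) (a := 1) (b := b) (c := c) one_ne_zero
  have hmonic : (X ^ 2 + C b * X + C c : R[X]).Monic := by
    rw [add_assoc]
    exact monic_X_pow_add (degree_linear_le.trans_lt (by decide))
  rw [hmonic.irreducible_iff_roots_eq_zero_of_degree_le_three hdeg.ge (by omega),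
    Multiset.eq_zero_iff_forall_notMem]
  intro x hx
  rw [mem_roots hmonic.ne_zero, IsRoot.def] at hx
  refine quadratic_ne_zero_of_discrim_ne_sq h x ?_
  simpa [sq] using hx

theorem ne_sq_of_discrim_ne_zero {a b c : R} (h : discrim a b c ≠ 0) (u : R[X]) :
    C a * X ^ 2 + C b * X + C c ≠ u ^ 2 := by
  intro hu
  have hdeg : u.natDegree ≤ 1 := by
    have := natDegree_quadratic_le (a := a) (b := b) (c := c)
    rw [hu, natDegree_pow] at this
    omega
  set α := u.coeff 1
  set β := u.coeff 0
  have hsq : u ^ 2 = C (α ^ 2) * X ^ 2 + C (2 * α * β) * X + C (β ^ 2) := by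
    rw [eq_X_add_C_of_natDegree_le_one hdeg]
    simp only [map_pow, map_mul, map_ofNat]
    ring
  rw [hsq] at hu
  have h2 := congrArg (coeff · 2) hu
  have h1 := congrArg (coeff · 1) hu
  have h0 := congrArg (coeff · 0) hu
  simp only [coeff_add, coeff_C_mul, coeff_X_pow, coeff_X, coeff_C] at h2 h1 h0
  norm_num at h2 h1 h0
  apply h
  rw [discrim, h2, h1, h0]
  ring

end Polynomial

namespace MvPolynomial

variable (R : Type*) [CommSemiring R]

noncomputable def finTwoAlgEquiv : MvPolynomial (Fin 2) R ≃ₐ[R] Polynomial (Polynomial R) :=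
  (renameEquiv R (Equiv.swap 0 1)).trans <|
    (finSuccEquiv R 1).trans (Polynomial.mapAlgEquiv (uniqueAlgEquiv R (Fin 1)))

variable {R}

@[simp]
theorem finTwoAlgEquiv_X_zero : finTwoAlgEquiv R (X 0) = Polynomial.C Polynomial.X := by
  have h := finSuccEquiv_X_succ (R := R) (j := (0 : Fin 1))
  simp only [Fin.succ_zero_eq_one] at h
  simp [finTwoAlgEquiv, h]

@[simp]
theorem finTwoAlgEquiv_X_one : finTwoAlgEquiv R (X 1) = Polynomial.X := by
  simp [finTwoAlgEquiv, finSuccEquiv_X_zero]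

@[simp]
theorem finTwoAlgEquiv_C (r : R) : finTwoAlgEquiv R (C r) = Polynomial.C (Polynomial.C r) :=
  (finTwoAlgEquiv R).commutes r

end MvPolynomial

theorem Complex.I_mul_sqrt_two_sq : (Complex.I * (Real.sqrt 2 : ℂ)) ^ 2 = -2 := by
  simp [mul_pow, ← Complex.ofReal_pow]

noncomputable def g1CoeffOne (a : ℂ) : Polynomial ℂ :=
  Polynomial.C (Complex.I * (Real.sqrt 2 : ℂ) * a) * Polynomial.X - Polynomial.C (a ^ 2 + 2)

noncomputable def g1CoeffZero (a : ℂ) : Polynomial ℂ :=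
  Polynomial.C (2 + a ^ 2 / 2) * Polynomial.X ^ 2 - Polynomial.C (2 * a ^ 2 + 4)

theorem finTwoAlgEquiv_g1 (a : ℂ) :
    finTwoAlgEquiv ℂ (g1 a) = -(Polynomial.X ^ 2 + Polynomial.C (g1CoeffOne a) * Polynomial.X
      + Polynomial.C (g1CoeffZero a)) := by
  simp only [g1, g1CoeffOne, g1CoeffZero, map_add, map_sub, map_mul, map_pow, map_neg, map_ofNat,
    finTwoAlgEquiv_C, finTwoAlgEquiv_X_zero, finTwoAlgEquiv_X_one]
  ring

theorem discrim_g1Coeff (a : ℂ) :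
    discrim 1 (g1CoeffOne a) (g1CoeffZero a) =
      Polynomial.C (-4 * a ^ 2 - 8) * Polynomial.X ^ 2
        + Polynomial.C (-2 * (Complex.I * (Real.sqrt 2 : ℂ)) * a * (a ^ 2 + 2)) * Polynomial.X
        + Polynomial.C (a ^ 4 + 12 * a ^ 2 + 20) := by
  refine Polynomial.funext fun t => ?_
  simp only [discrim, g1CoeffOne, g1CoeffZero, Polynomial.eval_add, Polynomial.eval_sub,
    Polynomial.eval_mul, Polynomial.eval_pow, Polynomial.eval_C, Polynomial.eval_X,
    Polynomial.eval_ofNat, Polynomial.eval_one]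
  linear_combination (a ^ 2 * t ^ 2) * Complex.I_mul_sqrt_two_sq

theorem discrim_g1Coeff_ne_sq {a : ℂ} (h2 : a ^ 2 + 2 ≠ 0) (h20 : a ^ 2 + 20 ≠ 0)
    (u : Polynomial ℂ) : discrim 1 (g1CoeffOne a) (g1CoeffZero a) ≠ u ^ 2 := by
  have hD : discrim (-4 * a ^ 2 - 8) (-2 * (Complex.I * (Real.sqrt 2 : ℂ)) * a * (a ^ 2 + 2))
      (a ^ 4 + 12 * a ^ 2 + 20) = 8 * (a ^ 2 + 2) ^ 2 * (a ^ 2 + 20) := by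
    rw [discrim]
    linear_combination (4 * a ^ 2 * (a ^ 2 + 2) ^ 2) * Complex.I_mul_sqrt_two_sq
  rw [discrim_g1Coeff]
  refine Polynomial.ne_sq_of_discrim_ne_zero ?_ u
  rw [hD]
  exact mul_ne_zero (mul_ne_zero (by norm_num) (pow_ne_zero 2 h2)) h20

theorem irreducible_g1 {a : ℂ} (h2 : a ^ 2 + 2 ≠ 0) (h20 : a ^ 2 + 20 ≠ 0) :
    Irreducible (g1 a) := by
  rw [← MulEquiv.irreducible_iff (finTwoAlgEquiv ℂ), finTwoAlgEquiv_g1]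
  exact (Associated.neg_left (Associated.refl _)).symm.irreducible
    (Polynomial.irreducible_X_sq_add_of_discrim_ne_sq (discrim_g1Coeff_ne_sq h2 h20))

/-- The set of `a ∈ ℂ` for which `g_{1,a}(t,x)` is not irreducible in `ℂ[t,x]` is finite;
in particular, for all but finitely many `a ∈ ℂ` the conic `g_{1,a} = 0` is reduced and
irreducible. -/
theorem finite_not_irreducible_g1 : {a : ℂ | ¬ Irreducible (g1 a)}.Finite := by
  have hP : (Polynomial.X ^ 2 + Polynomial.C 2) * (Polynomial.X ^ 2 + Polynomial.C 20)
      ≠ (0 : Polynomial ℂ) :=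
    ((Polynomial.monic_X_pow_add_C _ two_ne_zero).mul
      (Polynomial.monic_X_pow_add_C _ two_ne_zero)).ne_zero
  refine (Polynomial.finite_setOfPred_isRoot hP).subset fun a (ha : ¬ Irreducible (g1 a)) => ?_
  by_contra hroot
  simp only [Polynomial.IsRoot.def, Polynomial.eval_mul, Polynomial.eval_add, Polynomial.eval_pow,
    Polynomial.eval_X, Polynomial.eval_C, mul_eq_zero, Set.mem_ofPred_eq, not_or] at hroot
  exact ha (irreducible_g1 hroot.1 hroot.2)
end
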